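/- (Double robustness of the augmented survival estimator under treatment ignorability.) Fix z ∈ {1,...,J} and let π̃_z, p̃_z : 𝒳 → [c, 1−c] be measurable working functions with c ∈ (0, 1/2). If either π̃_z(X) = π_z(X) P-a.s. or p̃_z(X) = p_z(X) P-a.s., then E[1(Z=z)·(S − p̃_z(X))/π̃_z(X) + p̃_z(X)] = P(S_z = 1). -/

import Mathlib

/-!
Conditionally on `σ(X)`, treatment ignorability factorizes `E[1(Z=z) S_z | X]` as
`π_z(X) p_z(X)`, and on `{Z = z}` the observed survival is `S_z`. Hence the augmented estimator
has conditional mean `p̃ + (π_z / π̃) (p_z - p̃)`, which collapses to `p_z(X)` as soon as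
`π̃ = π_z` or `p̃ = p_z`; integrating, `E[p_z(X)] = E[S_z] = P(S_z = 1)`.
-/

open MeasureTheory ProbabilityTheory

noncomputable section

namespace TruncationByDeath

variable {Ω : Type*} {𝒳 : Type*} [MeasurableSpace Ω] [MeasurableSpace 𝒳]

/-- The σ-algebra on `Ω` generated by the covariate map `X`. -/
def mX (X : Ω → 𝒳) : MeasurableSpace Ω := MeasurableSpace.comap X inferInstance

/-- Real-valued indicator of the event `{Z = z}`. -/
def indic (Z : Ω → ℕ) (z : ℕ) : Ω → ℝ := fun ω => if Z ω = z then 1 else 0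

/-- Observed survival status `S := ∑_z 1(Z=z) ⬝ S_z`. -/
def Sobs (J : ℕ) (Z : Ω → ℕ) (S : ℕ → Ω → ℝ) : Ω → ℝ :=
  fun ω => ∑ z ∈ Finset.Icc 1 J, indic Z z ω * S z ω

/-- Observed outcome `Y := ∑_z 1(Z=z) ⬝ Y_z`. -/
def Yobs (J : ℕ) (Z : Ω → ℕ) (Y : ℕ → Ω → ℝ) : Ω → ℝ :=
  fun ω => ∑ z ∈ Finset.Icc 1 J, indic Z z ω * Y z ω

/-- Principal score `p_z(X) := E[S_z | σ(X)]`, with conventions `p_0 := 0` and `p_{J+1} := 1`. -/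
def pscore (P : Measure Ω) (X : Ω → 𝒳) (S : ℕ → Ω → ℝ) (J : ℕ) (z : ℕ) : Ω → ℝ :=
  if z = 0 then fun _ => 0 else if z = J + 1 then fun _ => 1 else P[S z | mX X]

/-- Treatment probability `π_z := P(Z = z)`. -/
def piZ (P : Measure Ω) (Z : Ω → ℕ) (z : ℕ) : ℝ := (P {ω | Z ω = z}).toReal

/-- Principal stratum variable `G := ∑_{z=1}^J S_z`. -/
def Gsum (J : ℕ) (S : ℕ → Ω → ℝ) : Ω → ℝ := fun ω => ∑ z ∈ Finset.Icc 1 J, S z ω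

/-- Real-valued indicator of the event `{G = g}`. -/
def indG (J : ℕ) (S : ℕ → Ω → ℝ) (g : ℕ) : Ω → ℝ :=
  Set.indicator {ω | Gsum J S ω = (g : ℝ)} (fun _ => (1 : ℝ))

/-- Principal score of the stratum `g` : `e_g(X) := E[1(G=g) | σ(X)]`. -/
def eg (P : Measure Ω) (X : Ω → 𝒳) (J : ℕ) (S : ℕ → Ω → ℝ) (g : ℕ) : Ω → ℝ :=
  P[indG J S g | mX X]

/-- Basic setup: measurability, ranges, values and integrability of the primitives. -/
structure Setup (P : Measure Ω) (J : ℕ) (X : Ω → 𝒳) (Z : Ω → ℕ)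
    (S Y : ℕ → Ω → ℝ) : Prop where
  hJ : 2 ≤ J
  hX : Measurable X
  hZ : Measurable Z
  hZr : ∀ ω, Z ω ∈ Finset.Icc 1 J
  hSm : ∀ z, Measurable (S z)
  hS01 : ∀ z ω, S z ω = 0 ∨ S z ω = 1
  hYm : ∀ z, Measurable (Y z)
  hYint : ∀ z, Integrable (Y z) P

/-- Randomization : `Z` is independent of `(X, S_1,…,S_J, Y_1,…,Y_J)` and `π_z > 0` for all
`z ∈ {1,…,J}`. -/
def Randomization (P : Measure Ω) (J : ℕ) (X : Ω → 𝒳) (Z : Ω → ℕ)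
    (S Y : ℕ → Ω → ℝ) : Prop :=
  IndepFun Z (fun ω => (X ω, fun z => S z ω, fun z => Y z ω)) P ∧
    ∀ z ∈ Finset.Icc 1 J, 0 < piZ P Z z

/-- Monotonicity : `S_{z'} ≤ S_z` a.s. whenever `z' ≤ z`. -/
def Monotonicity (P : Measure Ω) (J : ℕ) (S : ℕ → Ω → ℝ) : Prop :=
  ∀ z ∈ Finset.Icc 1 J, ∀ z' ∈ Finset.Icc 1 J, z' ≤ z → ∀ᵐ ω ∂P, S z' ω ≤ S z ω

/-- Principal ignorability. -/
def PrincipalIgnorability (P : Measure Ω) (J : ℕ) (X : Ω → 𝒳)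
    (S Y : ℕ → Ω → ℝ) : Prop :=
  ∀ z ∈ Finset.Icc 1 J, ∀ g ∈ Finset.Icc (J - z + 1) J, ∀ g' ∈ Finset.Icc (J - z + 1) J,
    (fun ω => (P[fun ω' => Y z ω' * indG J S g ω' | mX X]) ω * eg P X J S g' ω)
      =ᵐ[P] fun ω => (P[fun ω' => Y z ω' * indG J S g' ω' | mX X]) ω * eg P X J S g ω

/-- Positivity : the principal scores are uniformly bounded away from zero. -/
def Positivity (P : Measure Ω) (J : ℕ) (X : Ω → 𝒳) (S : ℕ → Ω → ℝ) : Prop :=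
  ∃ c : ℝ, 0 < c ∧ ∀ z ∈ Finset.Icc 1 J, ∀ᵐ ω ∂P, c ≤ pscore P X S J z ω

/-- Basic setup with bounded potential outcomes (observational setting). -/
structure SetupB (P : Measure Ω) (J : ℕ) (X : Ω → 𝒳) (Z : Ω → ℕ)
    (S Y : ℕ → Ω → ℝ) : Prop where
  hJ : 2 ≤ J
  hX : Measurable X
  hZ : Measurable Z
  hZr : ∀ ω, Z ω ∈ Finset.Icc 1 J
  hSm : ∀ z, Measurable (S z)
  hS01 : ∀ z ω, S z ω = 0 ∨ S z ω = 1
  hYm : ∀ z, Measurable (Y z)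
  hYbd : ∃ C, ∀ z ω, |Y z ω| ≤ C

/-- Generalized propensity score `π_z(X) := E[1(Z=z) | σ(X)]`. -/
def piX (P : Measure Ω) (X : Ω → 𝒳) (Z : Ω → ℕ) (z : ℕ) : Ω → ℝ :=
  P[indic Z z | mX X]

/-- Treatment ignorability in the observational setting: the generalized propensity scores
are bounded away from zero, and conditionally on `σ(X)` the treatment indicator factorizes
from any bounded measurable functional of the potential values. -/
def TreatmentIgnorability (P : Measure Ω) (J : ℕ) (X : Ω → 𝒳) (Z : Ω → ℕ)
    (S Y : ℕ → Ω → ℝ) : Prop :=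
  (∃ c : ℝ, 0 < c ∧ ∀ z ∈ Finset.Icc 1 J, ∀ᵐ ω ∂P, c ≤ piX P X Z z ω) ∧
  ∀ z ∈ Finset.Icc 1 J, ∀ φ : (ℕ → ℝ) → (ℕ → ℝ) → ℝ,
    Measurable (Function.uncurry φ) → (∃ C, ∀ s y, |φ s y| ≤ C) →
    P[fun ω => indic Z z ω * φ (fun w => S w ω) (fun w => Y w ω) | mX X]
      =ᵐ[P] fun ω => piX P X Z z ω
        * (P[fun ω' => φ (fun w => S w ω') (fun w => Y w ω') | mX X]) ω

lemma measurable_indic {Z : Ω → ℕ} (hZ : Measurable Z) (z : ℕ) : Measurable (indic Z z) :=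
  Measurable.ite (hZ (measurableSet_singleton z)) measurable_const measurable_const

lemma abs_indic_le_one {α : Type*} (Z : α → ℕ) (z : ℕ) (a : α) : |indic Z z a| ≤ 1 := by
  unfold indic
  split_ifs <;> simp

lemma integrable_indic {μ : Measure Ω} [IsFiniteMeasure μ] {Z : Ω → ℕ} (hZ : Measurable Z)
    (z : ℕ) : Integrable (indic Z z) μ :=
  .of_bound (measurable_indic hZ z).aestronglyMeasurable 1 (ae_of_all _ (abs_indic_le_one Z z))

lemma indic_mul_Sobs {α : Type*} {J z : ℕ} (hz : z ∈ Finset.Icc 1 J) (Z : α → ℕ)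
    (S : ℕ → α → ℝ) (a : α) : indic Z z a * Sobs J Z S a = indic Z z a * S z a := by
  by_cases h : Z a = z
  · rw [Sobs, Finset.sum_eq_single_of_mem z hz fun w _ hwz => by simp [indic, h, Ne.symm hwz]]
    simp [indic, h]
  · simp [indic, h]

lemma pscore_of_mem_Icc (P : Measure Ω) (X : Ω → 𝒳) (S : ℕ → Ω → ℝ) {J z : ℕ}
    (hz : z ∈ Finset.Icc 1 J) : pscore P X S J z = P[S z | mX X] := by
  obtain ⟨hz1, hzJ⟩ := Finset.mem_Icc.mp hz
  rw [pscore, if_neg (by omega), if_neg (by omega)]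

lemma integral_eq_measure_toReal_of_zero_or_one {μ : Measure Ω} {f : Ω → ℝ}
    (hf : Measurable f) (h01 : ∀ ω, f ω = 0 ∨ f ω = 1) :
    ∫ ω, f ω ∂μ = (μ {ω | f ω = 1}).toReal := by
  have hind : f = {ω | f ω = 1}.indicator 1 := by
    funext ω
    rcases h01 ω with h | h <;> simp [h]
  conv_lhs => rw [hind]
  exact integral_indicator_one (hf (measurableSet_singleton 1))

lemma mX_le {X : Ω → 𝒳} (hX : Measurable X) : mX X ≤ ‹MeasurableSpace Ω› :=
  hX.comap_le

lemma condExp_comp_mul {μ : Measure Ω} [IsFiniteMeasure μ] {X : Ω → 𝒳} (hX : Measurable X)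
    {ψ : 𝒳 → ℝ} (hψ : Measurable ψ) {C : ℝ} (hC : ∀ x, |ψ x| ≤ C) {g : Ω → ℝ}
    (hg : Integrable g μ) :
    μ[fun ω => ψ (X ω) * g ω | mX X] =ᵐ[μ] fun ω => ψ (X ω) * μ[g | mX X] ω :=
  condExp_mul_of_stronglyMeasurable_left (hψ.comp (comap_measurable X)).stronglyMeasurable
    (hg.bdd_mul (hψ.comp hX).aestronglyMeasurable (ae_of_all _ fun ω => hC (X ω))) hg

lemma TreatmentIgnorability.condExp_indic_mul_of_zero_or_one {P : Measure Ω} {J : ℕ}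
    {X : Ω → 𝒳} {Z : Ω → ℕ} {S Y : ℕ → Ω → ℝ} (hTI : TreatmentIgnorability P J X Z S Y)
    {z : ℕ} (hz : z ∈ Finset.Icc 1 J) (hS01 : ∀ ω, S z ω = 0 ∨ S z ω = 1) :
    P[fun ω => indic Z z ω * S z ω | mX X] =ᵐ[P] fun ω => piX P X Z z ω * P[S z | mX X] ω := by
  -- clamping to `[0, 1]` makes the functional bounded without changing it on `{0, 1}`
  let φ : (ℕ → ℝ) → (ℕ → ℝ) → ℝ := fun s _ => max 0 (min (s z) 1)
  have hφm : Measurable (Function.uncurry φ) :=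
    measurable_const.max (((measurable_pi_apply z).comp measurable_fst).min measurable_const)
  have hφb : ∀ s y, |φ s y| ≤ 1 := fun s y => by
    rw [abs_of_nonneg (le_max_left _ _)]
    exact max_le zero_le_one (min_le_right _ _)
  have hφS : ∀ ω, φ (fun w => S w ω) (fun w => Y w ω) = S z ω := fun ω => by
    rcases hS01 ω with h | h <;> simp [φ, h]
  simpa only [hφS] using hTI.2 z hz φ hφm ⟨1, hφb⟩

theorem condExp_augmented_estimator {P : Measure Ω} [IsFiniteMeasure P] {J : ℕ} {X : Ω → 𝒳}
    {Z : Ω → ℕ} {S Y : ℕ → Ω → ℝ} (hX : Measurable X) (hZ : Measurable Z)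
    (hTI : TreatmentIgnorability P J X Z S Y) {z : ℕ} (hz : z ∈ Finset.Icc 1 J)
    (hS : Measurable (S z)) (hS01 : ∀ ω, S z ω = 0 ∨ S z ω = 1) {c C : ℝ} (hc : 0 < c)
    {πt pt : 𝒳 → ℝ} (hπtm : Measurable πt) (hπt : ∀ x, c ≤ πt x) (hptm : Measurable pt)
    (hpt : ∀ x, |pt x| ≤ C) :
    P[fun ω => indic Z z ω * (Sobs J Z S ω - pt (X ω)) / πt (X ω) + pt (X ω) | mX X]
      =ᵐ[P] fun ω => pt (X ω) + piX P X Z z ω / πt (X ω) * (P[S z | mX X] ω - pt (X ω)) := by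
  have hπpos : ∀ x, 0 < πt x := fun x => hc.trans_le (hπt x)
  have hinv : ∀ x, |1 / πt x| ≤ 1 / c := fun x => by
    rw [abs_of_pos (one_div_pos.mpr (hπpos x))]
    exact one_div_le_one_div_of_le hc (hπt x)
  have hratio : ∀ x, |pt x / πt x| ≤ C / c := fun x => by
    rw [abs_div, abs_of_pos (hπpos x)]
    exact div_le_div₀ ((abs_nonneg _).trans (hpt x)) (hpt x) hc (hπt x)
  have hZi : Integrable (indic Z z) P := integrable_indic hZ z
  have hZS : Integrable (fun ω => indic Z z ω * S z ω) P :=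
    hZi.mul_bdd (c := 1) hS.aestronglyMeasurable (ae_of_all _ fun ω => by
      rcases hS01 ω with h | h <;> simp [h])
  have hptX : Integrable (fun ω => pt (X ω)) P :=
    .of_bound (hptm.comp hX).aestronglyMeasurable C (ae_of_all _ fun ω => hpt (X ω))
  have hA : Integrable (fun ω => 1 / πt (X ω) * (indic Z z ω * S z ω)) P :=
    hZS.bdd_mul (measurable_const.div hπtm |>.comp hX).aestronglyMeasurable
      (ae_of_all _ fun ω => hinv (X ω))
  have hB : Integrable (fun ω => pt (X ω) / πt (X ω) * indic Z z ω) P :=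
    hZi.bdd_mul (hptm.div hπtm |>.comp hX).aestronglyMeasurable
      (ae_of_all _ fun ω => hratio (X ω))
  have hdecomp : (fun ω => indic Z z ω * (Sobs J Z S ω - pt (X ω)) / πt (X ω) + pt (X ω))
      = (fun ω => 1 / πt (X ω) * (indic Z z ω * S z ω))
        - (fun ω => pt (X ω) / πt (X ω) * indic Z z ω) + fun ω => pt (X ω) := by
    funext ω
    simp only [Pi.add_apply, Pi.sub_apply, mul_sub, indic_mul_Sobs hz]
    ring
  have hptX_cond : P[fun ω => pt (X ω) | mX X] = fun ω => pt (X ω) :=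
    condExp_of_stronglyMeasurable (mX_le hX)
      (hptm.comp (comap_measurable X)).stronglyMeasurable hptX
  rw [hdecomp]
  filter_upwards [condExp_add (hA.sub hB) hptX (mX X), condExp_sub hA hB (mX X),
    condExp_comp_mul (ψ := fun x => 1 / πt x) hX (measurable_const.div hπtm) hinv hZS,
    condExp_comp_mul (ψ := fun x => pt x / πt x) hX (hptm.div hπtm) hratio hZi,
    hTI.condExp_indic_mul_of_zero_or_one hz hS01] with ω hadd hsub hA' hB' hTIω
  simp only [Pi.add_apply, Pi.sub_apply] at hadd hsub
  rw [hadd, hsub, hA', hB', hTIω, hptX_cond, piX]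
  ring

/-- **double robustness of the augmented survival estimator under treatment
ignorability.** If either the working propensity score or the working principal score is
correct, the augmented estimator recovers `P(S_z = 1)`. -/
theorem statement12 (P : Measure Ω) [IsProbabilityMeasure P] (J : ℕ)
    (X : Ω → 𝒳) (Z : Ω → ℕ) (S Y : ℕ → Ω → ℝ)
    (hset : SetupB P J X Z S Y)
    (hTI : TreatmentIgnorability P J X Z S Y)
    (z : ℕ) (hz : z ∈ Finset.Icc 1 J)
    (cw : ℝ) (hcw : 0 < cw ∧ cw < 1 / 2)
    (πt pt : 𝒳 → ℝ)
    (hπtm : Measurable πt) (hπtb : ∀ x, πt x ∈ Set.Icc cw (1 - cw))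
    (hptm : Measurable pt) (hptb : ∀ x, pt x ∈ Set.Icc cw (1 - cw))
    (hdr : ((fun ω => πt (X ω)) =ᵐ[P] piX P X Z z)
      ∨ ((fun ω => pt (X ω)) =ᵐ[P] pscore P X S J z)) :
    ∫ ω, (indic Z z ω * (Sobs J Z S ω - pt (X ω)) / πt (X ω) + pt (X ω)) ∂P
      = (P {ω | S z ω = 1}).toReal := by
  have hpt : ∀ x, |pt x| ≤ 1 := fun x =>
    abs_le.mpr ⟨by linarith [(hptb x).1], by linarith [(hptb x).2]⟩
  have hcond := condExp_augmented_estimator hset.hX hset.hZ hTI hz (hset.hSm z) (hset.hS01 z)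
    hcw.1 hπtm (fun x => (hπtb x).1) hptm hpt
  have hrobust : (fun ω => pt (X ω) + piX P X Z z ω / πt (X ω) * (P[S z | mX X] ω - pt (X ω)))
      =ᵐ[P] P[S z | mX X] := by
    rcases hdr with hπ | hp
    · filter_upwards [hπ] with ω h
      have : πt (X ω) ≠ 0 := (hcw.1.trans_le (hπtb (X ω)).1).ne'
      rw [← h, div_self this]
      ring
    · rw [pscore_of_mem_Icc P X S hz] at hp
      filter_upwards [hp] with ω h
      rw [h]
      ring
  rw [← integral_condExp (mX_le hset.hX), integral_congr_ae (hcond.trans hrobust),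
    integral_condExp (mX_le hset.hX)]
  exact integral_eq_measure_toReal_of_zero_or_one (hset.hSm z) (hset.hS01 z)

end TruncationByDeath
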